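/- arXiv:1905.08425 — 2 statements merged into one kernel-verified Lean document; each statement's English description precedes it below -/
import Mathlib

section
/- Let 𝒜 be a largeness class. Then ℒ(𝒜) is the largest partition regular subclass of 𝒜; that is: (1) ℒ(𝒜) is a partition regular class, (2) ℒ(𝒜) ⊆ 𝒜, and (3) every partition regular class ℬ with ℬ ⊆ 𝒜 satisfies ℬ ⊆ ℒ(𝒜). -/
/-- A class `𝒜` of subsets of `ℕ` is a *largeness class* if it is nonempty,
upward closed, and for every `k ≥ 1` and every `k`-cover `Y₀ ∪ … ∪ Y_{k-1} = ℕ`,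
some `Y j` belongs to `𝒜`. -/
def IsLargenessClass (𝒜 : Set (Set ℕ)) : Prop :=
  𝒜.Nonempty ∧
  (∀ X ∈ 𝒜, ∀ Y : Set ℕ, X ⊆ Y → Y ∈ 𝒜) ∧
  (∀ k : ℕ, 1 ≤ k → ∀ Y : Fin k → Set ℕ, (⋃ j, Y j) = Set.univ → ∃ j, Y j ∈ 𝒜)

/-- A class `𝒞` of subsets of `ℕ` is *partition regular* if it is a largeness
class and for every `X ∈ 𝒞`, every `k ≥ 1` and every cover `Y₀ ∪ … ∪ Y_{k-1} ⊇ X`,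
some `Y j` belongs to `𝒞`. -/
def IsPartitionRegular (𝒞 : Set (Set ℕ)) : Prop :=
  IsLargenessClass 𝒞 ∧
  (∀ X ∈ 𝒞, ∀ k : ℕ, 1 ≤ k → ∀ Y : Fin k → Set ℕ, X ⊆ ⋃ j, Y j → ∃ j, Y j ∈ 𝒞)

/-- `ℒ(𝒜)`: the class of all `X ⊆ ℕ` such that for every `k ≥ 1` and every cover
`X₀ ∪ … ∪ X_{k-1} ⊇ X`, some `X i` belongs to `𝒜`. -/
def Lcal (𝒜 : Set (Set ℕ)) : Set (Set ℕ) :=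
  { X | ∀ k : ℕ, 1 ≤ k → ∀ Y : Fin k → Set ℕ, X ⊆ ⋃ i, Y i → ∃ i, Y i ∈ 𝒜 }

lemma lcal_cover {𝒜 : Set (Set ℕ)} {X : Set ℕ} (hX : X ∈ Lcal 𝒜)
    {ι : Type} [Fintype ι] [Nonempty ι] (Y : ι → Set ℕ)
    (h : X ⊆ ⋃ i, Y i) : ∃ i, Y i ∈ 𝒜 := by
  have e := Fintype.equivFin ι
  have hk : 1 ≤ Fintype.card ι := Fintype.card_pos
  have hcov : X ⊆ ⋃ j, Y (e.symm j) := by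
    rwa [e.symm.surjective.iUnion_comp]
  obtain ⟨j, hj⟩ := hX _ hk _ hcov
  exact ⟨e.symm j, hj⟩

theorem lcal_largest_partitionRegular
    (𝒜 : Set (Set ℕ)) (hlarge : IsLargenessClass 𝒜) :
    IsPartitionRegular (Lcal 𝒜) ∧ Lcal 𝒜 ⊆ 𝒜 ∧
      ∀ ℬ : Set (Set ℕ), IsPartitionRegular ℬ → ℬ ⊆ 𝒜 → ℬ ⊆ Lcal 𝒜 := by
  obtain ⟨hne, hup, hcov⟩ := hlarge
  have hsub : Lcal 𝒜 ⊆ 𝒜 := by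
    intro X hX
    obtain ⟨i, hi⟩ := hX 1 le_rfl (fun _ => X) (Set.subset_iUnion (fun _ : Fin 1 => X) 0)
    exact hi
  have huniv : Set.univ ∈ Lcal 𝒜 := by
    intro k hk Y hY
    exact hcov k hk Y (Set.eq_univ_of_univ_subset hY)
  have hPR : ∀ X ∈ Lcal 𝒜, ∀ k : ℕ, 1 ≤ k → ∀ Y : Fin k → Set ℕ,
      X ⊆ ⋃ j, Y j → ∃ j, Y j ∈ Lcal 𝒜 := by
    intro X hX k hk Y hXY
    by_contra hno
    push_neg at hno
    have hch : ∀ j : Fin k, ∃ m : ℕ, 1 ≤ m ∧ ∃ Z : Fin m → Set ℕ,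
        Y j ⊆ ⋃ i, Z i ∧ ∀ i, Z i ∉ 𝒜 := by
      intro j
      have h := hno j
      unfold Lcal at h
      simp only [Set.mem_setOf_eq] at h
      push_neg at h
      obtain ⟨m, hm, Z, hZ1, hZ2⟩ := h
      exact ⟨m, hm, Z, hZ1, hZ2⟩
    choose m hm Z hZcov hZnot using hch
    haveI : Nonempty ((j : Fin k) × Fin (m j)) := ⟨⟨⟨0, hk⟩, ⟨0, hm _⟩⟩⟩
    have hcover : X ⊆ ⋃ p : Σ j : Fin k, Fin (m j), (Y p.1 ∩ Z p.1 p.2) := by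
      intro x hx
      obtain ⟨j, hj⟩ := Set.mem_iUnion.mp (hXY hx)
      obtain ⟨i, hi⟩ := Set.mem_iUnion.mp (hZcov j hj)
      exact Set.mem_iUnion.mpr ⟨⟨j, i⟩, ⟨hj, hi⟩⟩
    obtain ⟨⟨j, i⟩, hji⟩ := lcal_cover hX _ hcover
    exact hZnot j i (hup _ hji _ Set.inter_subset_right)
  refine ⟨⟨⟨⟨Set.univ, huniv⟩, ?_, ?_⟩, hPR⟩, hsub, ?_⟩
  · intro X hX Y hXY k hk W hW
    exact hX k hk W (hXY.trans hW)
  · intro k hk Y hY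
    exact hPR _ huniv k hk Y hY.ge
  · intro ℬ hB hBA X hX k hk Y hY
    obtain ⟨j, hj⟩ := hB.2 X hX k hk Y hY
    exact ⟨j, hBA hj⟩
end

section
/- Let S be a set of finite subsets of ℕ and let 𝒜 = { X ⊆ ℕ : there exists F ∈ S with F ⊆ X } be its upward closure. Then 𝒜 is a largeness class if and only if for every k ≥ 1 there exists n ∈ ℕ such that for every cover of {0, 1, …, n} by k finite sets F₀ ∪ … ∪ F_{k−1} ⊇ {0, …, n}, there is some j < k with F_j ∈ 𝒜 (i.e., some member of S is contained in F_j). -/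
theorem largeness_iff_compactness
    (S : Set (Finset ℕ))
    (𝒜 : Set (Set ℕ))
    (h𝒜 : 𝒜 = { X : Set ℕ | ∃ F ∈ S, (F : Set ℕ) ⊆ X }) :
    IsLargenessClass 𝒜 ↔
      ∀ k : ℕ, 1 ≤ k → ∃ n : ℕ, ∀ F : Fin k → Finset ℕ,
        Set.Iic n ⊆ ⋃ j, ((F j : Set ℕ)) → ∃ j, (F j : Set ℕ) ∈ 𝒜 := by
  classical
  have hup : ∀ X ∈ 𝒜, ∀ Y : Set ℕ, X ⊆ Y → Y ∈ 𝒜 := by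
    intro X hX Y hXY
    rw [h𝒜] at hX ⊢
    obtain ⟨G, hG, hGX⟩ := hX
    exact ⟨G, hG, hGX.trans hXY⟩
  constructor
  · rintro ⟨hne, -, hcov⟩ k hk
    by_contra hno
    push_neg at hno
    choose Fseq hFcov hFnot using hno
    -- coloring: for each n and i, a color of i in the cover Fseq n
    have hk0 : (0 : ℕ) < k := hk
    set c : ℕ → ℕ → Fin k := fun n i =>
      if h : ∃ j, i ∈ Fseq n j then h.choose else ⟨0, hk0⟩ with hc
    have hcmem : ∀ n i, i ≤ n → i ∈ Fseq n (c n i) := by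
      intro n i hi
      have hex : ∃ j, i ∈ Fseq n j := by
        have := hFcov n (Set.mem_Iic.2 hi)
        simpa using this
      simp only [hc, dif_pos hex]
      exact hex.choose_spec
    -- take a limit coloring along a free ultrafilter
    let U : Ultrafilter ℕ := Filter.hyperfilter ℕ
    have hlim : ∀ i : ℕ, ∃ j : Fin k, {n | c n i = j} ∈ U := by
      intro i
      by_contra hnone
      push_neg at hnone
      have hcompl : ∀ j : Fin k, {n | c n i = j}ᶜ ∈ U := fun j =>
        Ultrafilter.compl_mem_iff_notMem.2 (hnone j)
      have : (⋂ j : Fin k, {n | c n i = j}ᶜ) ∈ U :=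
        Filter.iInter_mem.2 hcompl
      obtain ⟨m, hm⟩ := Filter.nonempty_of_mem this
      simp only [Set.mem_iInter, Set.mem_compl_iff, Set.mem_setOf_eq] at hm
      exact hm (c m i) rfl
    choose cl hcl using hlim
    -- cover of ℕ by the color classes
    obtain ⟨j, hj⟩ := hcov k hk (fun j => {i | cl i = j}) (by
      ext i; simp only [Set.mem_iUnion, Set.mem_setOf_eq, Set.mem_univ, iff_true]
      exact ⟨cl i, rfl⟩)
    rw [h𝒜] at hj
    obtain ⟨G, hGS, hGsub⟩ := hj
    -- find m ≥ all of G with c m agreeing with cl on G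
    have hT : ({m | ∀ i ∈ G, c m i = cl i} ∩ {m | ∀ i ∈ G, i ≤ m}) ∈ U := by
      apply Filter.inter_mem
      · have : (⋂ i ∈ G, {m | c m i = cl i}) ∈ U := by
          apply Filter.biInter_mem G.finite_toSet |>.2
          intro i _
          exact hcl i
        apply Filter.mem_of_superset this
        intro m hm
        simp only [Set.mem_iInter, Set.mem_setOf_eq] at hm ⊢
        exact hm
      · have hcof : {m | ∀ i ∈ G, i ≤ m} ∈ Filter.cofinite := by
          rcases G.eq_empty_or_nonempty with h | h
          · simp [h]
          · obtain ⟨b, hb⟩ := G.exists_max_image id h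
            have hIci : Set.Ici b ∈ (Filter.cofinite : Filter ℕ) := by
              rw [Filter.mem_cofinite]
              simpa using Set.finite_Iio b
            apply Filter.mem_of_superset hIci
            intro m hm i hi
            exact le_trans (hb.2 i hi) hm
        exact Filter.hyperfilter_le_cofinite hcof
    obtain ⟨m, hm1, hm2⟩ := Filter.nonempty_of_mem hT
    -- then G ⊆ Fseq m j, contradicting hFnot
    apply hFnot m j
    rw [h𝒜]
    refine ⟨G, hGS, ?_⟩
    intro i hi
    have hi' : i ∈ G := by simpa using hi
    have h1 : c m i = cl i := hm1 i hi'
    have h2 : i ≤ m := hm2 i hi'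
    have h3 : cl i = j := hGsub hi'
    have := hcmem m i h2
    rw [h1, h3] at this
    exact this
  · intro H
    obtain ⟨n1, hn1⟩ := H 1 le_rfl
    have hne : 𝒜.Nonempty := by
      obtain ⟨j, hj⟩ := hn1 (fun _ => Finset.Iic n1) (by
        intro x hx
        simp only [Set.mem_iUnion, Finset.coe_Iic]
        exact ⟨0, hx⟩)
      exact ⟨_, hj⟩
    refine ⟨hne, hup, ?_⟩
    intro k hk Y hY
    obtain ⟨n, hn⟩ := H k hk
    set F : Fin k → Finset ℕ := fun j => (Finset.Iic n).filter (· ∈ Y j) with hF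
    obtain ⟨j, hj⟩ := hn F (by
      intro x hx
      have hx' : x ≤ n := hx
      have : x ∈ (⋃ j, Y j) := hY ▸ Set.mem_univ x
      obtain ⟨j, hj⟩ := Set.mem_iUnion.1 this
      exact Set.mem_iUnion.2 ⟨j, by simp [hF, hx', hj]⟩)
    refine ⟨j, hup _ hj _ ?_⟩
    intro x hx
    simp only [hF, Finset.coe_filter, Set.mem_setOf_eq] at hx
    exact hx.2
end
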